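/- Let K be a field, p a positive integer, and A ∈ M_p(K) a matrix such that A + P is invertible for every invertible P ∈ M_p(K). Then A = 0. -/

import Mathlib

/-!
If `A v ≠ 0`, an invertible `P` sending `v` to `-A v` exists because the general linear group
acts transitively on nonzero vectors; then `(A + P) v = 0`, so `A + P` is singular.
-/

open Module

theorem LinearEquiv.exists_apply_eq_of_ne_zero {K V : Type*} [DivisionRing K] [AddCommGroup V]
    [Module K V] {v w : V} (hv : v ≠ 0) (hw : w ≠ 0) : ∃ g : V ≃ₗ[K] V, g v = w := by
  obtain ⟨g, hg⟩ := Submodule.exists_linearEquiv_restrict_eq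
    (LinearEquiv.coord K V v hv ≪≫ₗ LinearEquiv.toSpanNonzeroSingleton K V w hw)
  refine ⟨g, ?_⟩
  simpa [LinearEquiv.coord_self] using (hg ⟨v, Submodule.mem_span_singleton_self v⟩).symm

theorem Module.End.eq_zero_of_forall_isUnit_add {K V : Type*} [DivisionRing K] [AddCommGroup V]
    [Module K V] (f : End K V) (h : ∀ g : End K V, IsUnit g → IsUnit (f + g)) : f = 0 := by
  by_contra hf
  obtain ⟨v, hv⟩ : ∃ v, f v ≠ 0 := by
    by_contra! hfv
    exact hf (LinearMap.ext hfv)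
  have hv0 : v ≠ 0 := by rintro rfl; simp at hv
  obtain ⟨g, hg⟩ := LinearEquiv.exists_apply_eq_of_ne_zero (K := K) hv0 (neg_ne_zero.mpr hv)
  have hunit : IsUnit (f + g.toLinearMap) := h g ((End.isUnit_iff _).mpr g.bijective)
  exact hv0 <| ((End.isUnit_iff _).mp hunit).injective (by simp [hg])

theorem stmt_0 {K : Type*} [Field K] {p : ℕ}
    (A : Matrix (Fin p) (Fin p) K)
    (h : ∀ P : Matrix (Fin p) (Fin p) K, IsUnit P → IsUnit (A + P)) :
    A = 0 := by
  let e := Matrix.toLinAlgEquiv' (R := K) (n := Fin p)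
  have hA : e A = 0 := End.eq_zero_of_forall_isUnit_add (e A) fun g hg => by
    simpa [e] using (h (e.symm g) (hg.map e.symm)).map e
  simpa using hA
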